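/- Let G be a Garside group of finite type. For every x ∈ G, iterated application of cyclic sliding eventually reaches a period: there exist integers N ≥ 0 and M > 0 such that 𝔰^{M+N}(x) = 𝔰^N(x). -/

import Mathlib

namespace GarsidePaper

/-- A Garside structure of finite type on a group `G`: a positive submonoid `P` with
`P ∩ P⁻¹ = {1}`, a Garside element `Δ ∈ P`, the prefix order `a ≼ b ↔ a⁻¹b ∈ P`
a lattice order (with meet `wedge` and join `vee`), the simple elements `[1,Δ]`
generating `G` and being finite, `Δ⁻¹PΔ = P`, a finite norm on positive elements,
and the infimum and supremum functions `inf`, `sup` characterised by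
`Δ^(inf x) ≼ x ≼ Δ^(sup x)` with `inf x` maximal and `sup x` minimal. -/
structure Garside (G : Type*) [Group G] where
  P : Submonoid G
  Δ : G
  purity : ∀ a : G, a ∈ P → a⁻¹ ∈ P → a = 1
  delta_mem : Δ ∈ P
  wedge : G → G → G
  vee : G → G → G
  wedge_le_left : ∀ a b : G, (wedge a b)⁻¹ * a ∈ P
  wedge_le_right : ∀ a b : G, (wedge a b)⁻¹ * b ∈ P
  le_wedge : ∀ a b c : G, c⁻¹ * a ∈ P → c⁻¹ * b ∈ P → c⁻¹ * wedge a b ∈ P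
  le_vee_left : ∀ a b : G, a⁻¹ * vee a b ∈ P
  le_vee_right : ∀ a b : G, b⁻¹ * vee a b ∈ P
  vee_le : ∀ a b c : G, a⁻¹ * c ∈ P → b⁻¹ * c ∈ P → (vee a b)⁻¹ * c ∈ P
  simples_generate : Subgroup.closure {a : G | a ∈ P ∧ a⁻¹ * Δ ∈ P} = (⊤ : Subgroup G)
  conj_pos : ∀ a : G, a ∈ P → Δ⁻¹ * a * Δ ∈ P
  norm : G → ℕ
  norm_exists : ∀ x : G, x ∈ P → x ≠ 1 →
    ∃ l : List G, (∀ s ∈ l, s ∈ P ∧ s ≠ 1) ∧ l.prod = x ∧ l.length = norm x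
  norm_max : ∀ x : G, x ∈ P → x ≠ 1 →
    ∀ l : List G, (∀ s ∈ l, s ∈ P ∧ s ≠ 1) → l.prod = x → l.length ≤ norm x
  simples_finite : Set.Finite {a : G | a ∈ P ∧ a⁻¹ * Δ ∈ P}
  inf : G → ℤ
  sup : G → ℤ
  inf_le : ∀ x : G, (Δ ^ inf x)⁻¹ * x ∈ P
  inf_max : ∀ (x : G) (p : ℤ), (Δ ^ p)⁻¹ * x ∈ P → p ≤ inf x
  le_sup : ∀ x : G, x⁻¹ * Δ ^ sup x ∈ P
  sup_min : ∀ (x : G) (q : ℤ), x⁻¹ * Δ ^ q ∈ P → sup x ≤ q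

namespace Garside

variable {G : Type*} [Group G]

/-- The prefix order `a ≼ b`. -/
def le (S : Garside G) (a b : G) : Prop := a⁻¹ * b ∈ S.P

/-- The canonical length `ℓ(x) = sup(x) - inf(x)`. -/
def len (S : Garside G) (x : G) : ℤ := S.sup x - S.inf x

/-- The initial factor `ι(x) = (x Δ^(-inf x)) ∧ Δ`. -/
def iota (S : Garside G) (x : G) : G := S.wedge (x * S.Δ ^ (-S.inf x)) S.Δ

/-- The preferred prefix `𝔭(x) = ι(x) ∧ ι(x⁻¹)`. -/
def pp (S : Garside G) (x : G) : G := S.wedge (S.iota x) (S.iota x⁻¹)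

/-- Cyclic sliding `𝔰(x) = 𝔭(x)⁻¹ x 𝔭(x)`. -/
def sl (S : Garside G) (x : G) : G := (S.pp x)⁻¹ * x * S.pp x

/-- The final factor `φ(x) = (Δ^(sup x - 1) ∧ x)⁻¹ x`. -/
def phi (S : Garside G) (x : G) : G := (S.wedge (S.Δ ^ (S.sup x - 1)) x)⁻¹ * x

/-- Conjugation by `Δ`: `τ(x) = Δ⁻¹ x Δ`. -/
def tau (S : Garside G) (x : G) : G := S.Δ⁻¹ * x * S.Δ

/-- Cycling `c(x) = ι(x)⁻¹ x ι(x)`. -/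
def cyc (S : Garside G) (x : G) : G := (S.iota x)⁻¹ * x * S.iota x

/-- Decycling `d(x) = φ(x) x φ(x)⁻¹`. -/
def dec (S : Garside G) (x : G) : G := S.phi x * x * (S.phi x)⁻¹

/-- The transport `α^{(1)} = 𝔭(x)⁻¹ α 𝔭(x^α)` of `α` at `x`. -/
def transport (S : Garside G) (x α : G) : G := (S.pp x)⁻¹ * α * S.pp (α⁻¹ * x * α)

/-- The iterated transport: `itTransport x i α = α^{(i)}`, the transport of `α^{(i-1)}`
at `𝔰^{i-1}(x)`, with `α^{(0)} = α`. -/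
def itTransport (S : Garside G) (x : G) : ℕ → G → G
  | 0, α => α
  | i + 1, α => S.transport ((S.sl)^[i] x) (S.itTransport x i α)

/-- `𝔓_i(x) = 𝔭(x) 𝔭(𝔰(x)) ⋯ 𝔭(𝔰^{i-1}(x))`, with `𝔓₀(x) = 1`. -/
def PP (S : Garside G) (x : G) : ℕ → G
  | 0 => 1
  | i + 1 => S.PP x i * S.pp ((S.sl)^[i] x)

/-- The summit set `SS(x)`. -/
def SS (S : Garside G) (x : G) : Set G :=
  {y | IsConj x y ∧ ∀ z : G, IsConj x z → S.inf z ≤ S.inf y}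

/-- The super summit set `SSS(x)`. -/
def SSS (S : Garside G) (x : G) : Set G :=
  {y | IsConj x y ∧ (∀ z : G, IsConj x z → S.inf z ≤ S.inf y) ∧
       (∀ z : G, IsConj x z → S.sup y ≤ S.sup z)}

/-- The ultra summit set `USS(x)`. -/
def USS (S : Garside G) (x : G) : Set G :=
  {y | y ∈ S.SSS x ∧ ∃ m : ℕ, 1 ≤ m ∧ (S.cyc)^[m] y = y}

/-- The reduced super summit set `RSSS(x)`. -/
def RSSS (S : Garside G) (x : G) : Set G :=
  {y | IsConj x y ∧ (∃ m : ℕ, 1 ≤ m ∧ (S.cyc)^[m] y = y) ∧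
       (∃ n : ℕ, 1 ≤ n ∧ (S.dec)^[n] y = y)}

/-- The set of sliding circuits `SC(x)`. -/
def SC (S : Garside G) (x : G) : Set G :=
  {y | IsConj x y ∧ ∃ m : ℕ, 1 ≤ m ∧ (S.sl)^[m] y = y}

end Garside

/-!
Cyclic sliding conjugates `y` by a positive element `𝔭(y)` lying below both `y Δ^(-inf y)` and
`y⁻¹ Δ^(sup y)`, so along the orbit of `x` the infimum never decreases and the supremum never
increases: the orbit stays in the interval `[Δ^(inf x), Δ^(sup x)]`. That interval is finite,
because splitting off the simple head `Δ ∧ y` of `y ≼ Δ^(n+1)` leaves an element `≼ Δ^n`; and a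
map with a finite orbit is eventually periodic on it.

Both steps need conjugation by `Δ` to map `P` onto `P`. The inclusion `Δ P Δ⁻¹ ⊆ P` holds because
conjugation by `Δ⁻¹` is injective, hence bijective, on the finite set of simples, and `P` is
generated as a monoid by the simples: group generation gives `Δⁿ a` in that monoid, and the
left-greedy step `Δ ∧ s q ≼ s (Δ ∧ q)` lets one peel the factors `Δ` off again.
-/

theorem Function.exists_iterate_add_eq_of_finite {α : Type*} {f : α → α} {x : α} {s : Set α}
    (hs : s.Finite) (h : ∀ k, f^[k] x ∈ s) : ∃ N M : ℕ, 0 < M ∧ f^[M + N] x = f^[N] x := by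
  obtain ⟨N, K, hNK, heq⟩ := hs.exists_lt_map_eq_of_forall_mem h
  exact ⟨N, K - N, by omega, by rw [Nat.sub_add_cancel hNK.le, heq]⟩

namespace Garside

variable {G : Type*} [Group G] {S : Garside G} {a b c : G}

namespace le

lemma refl (S : Garside G) (a : G) : S.le a a := by
  simp [le, one_mem]

lemma trans (hab : S.le a b) (hbc : S.le b c) : S.le a c := by
  simpa [le, mul_assoc] using mul_mem hab hbc

lemma antisymm (hab : S.le a b) (hba : S.le b a) : a = b :=
  inv_mul_eq_one.1 (S.purity _ hab (by simpa [le] using hba))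

end le

lemma one_le_iff : S.le 1 a ↔ a ∈ S.P := by
  simp [le]

lemma mul_le_mul_iff_left (c : G) : S.le (c * a) (c * b) ↔ S.le a b := by
  simp [le, mul_assoc]

lemma le_mul_of_mem (hb : b ∈ S.P) (a : G) : S.le a (a * b) := by
  simpa [le] using hb

lemma wedge_eq_left (h : S.le a b) : S.wedge a b = a :=
  le.antisymm (S.wedge_le_left a b) (S.le_wedge a b a (le.refl S a) h)

lemma wedge_eq_right (h : S.le b a) : S.wedge a b = b :=
  le.antisymm (S.wedge_le_right a b) (S.le_wedge a b b h (le.refl S b))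

lemma delta_le_mul_delta (ha : a ∈ S.P) : S.le S.Δ (a * S.Δ) := by
  simpa [le, mul_assoc] using S.conj_pos a ha

def simples (S : Garside G) : Set G := {a | a ∈ S.P ∧ a⁻¹ * S.Δ ∈ S.P}

lemma inv_mul_mem_simples (hab : S.le a b) (hb : S.le b (a * S.Δ)) : a⁻¹ * b ∈ S.simples :=
  ⟨hab, by simpa [le, mul_assoc] using hb⟩

lemma delta_conj_inv_mem_simples (ha : a ∈ S.simples) : S.Δ⁻¹ * a * S.Δ ∈ S.simples :=
  ⟨S.conj_pos a ha.1, by simpa [mul_assoc] using S.conj_pos _ ha.2⟩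

lemma delta_conj_mem_simples (ha : a ∈ S.simples) : S.Δ * a * S.Δ⁻¹ ∈ S.simples := by
  have hbij : Set.BijOn (fun b => S.Δ⁻¹ * b * S.Δ) S.simples S.simples :=
    (S.simples_finite.injOn_iff_bijOn_of_mapsTo fun _ => delta_conj_inv_mem_simples).1
      fun _ _ _ _ h => by simpa using h
  obtain ⟨b, hb, rfl⟩ := hbij.surjOn ha
  simpa [mul_assoc] using hb

lemma closure_simples_le : Submonoid.closure S.simples ≤ S.P :=
  Submonoid.closure_le.2 fun _ ha => ha.1

lemma delta_conj_mem_closure {q : G} (hq : q ∈ Submonoid.closure S.simples) :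
    S.Δ * q * S.Δ⁻¹ ∈ Submonoid.closure S.simples := by
  have : Submonoid.closure S.simples ≤ (Submonoid.closure S.simples).comap (MulAut.conj S.Δ) :=
    Submonoid.closure_le.2 fun _ ha => Submonoid.subset_closure (delta_conj_mem_simples ha)
  exact this hq

lemma delta_pow_conj_mem_closure (n : ℕ) {q : G} (hq : q ∈ Submonoid.closure S.simples) :
    S.Δ ^ n * q * (S.Δ ^ n)⁻¹ ∈ Submonoid.closure S.simples := by
  induction n with
  | zero => simpa using hq
  | succ n ih => simpa [pow_succ', mul_assoc] using delta_conj_mem_closure ih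

lemma exists_delta_pow_mul_mem_closure (g : G) :
    ∃ n : ℕ, S.Δ ^ n * g ∈ Submonoid.closure S.simples := by
  have hg : g ∈ Subgroup.closure S.simples := S.simples_generate ▸ Subgroup.mem_top g
  induction hg using Subgroup.closure_induction'' with
  | mem s hs => exact ⟨0, by simpa using Submonoid.subset_closure hs⟩
  | inv_mem s hs =>
    have hcompl : s⁻¹ * S.Δ ∈ S.simples := by
      simpa using inv_mul_mem_simples (S := S) hs.2 (delta_le_mul_delta hs.1)
    exact ⟨1, by simpa [mul_assoc] using delta_conj_mem_closure (Submonoid.subset_closure hcompl)⟩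
  | one => exact ⟨0, by simp [one_mem]⟩
  | mul g h _ _ hg hh =>
    obtain ⟨n, hn⟩ := hg
    obtain ⟨m, hm⟩ := hh
    refine ⟨n + m, ?_⟩
    have := mul_mem (delta_pow_conj_mem_closure m hn) hm
    rwa [show S.Δ ^ m * (S.Δ ^ n * g) * (S.Δ ^ m)⁻¹ * (S.Δ ^ m * h) = S.Δ ^ (n + m) * (g * h) by
      rw [pow_add]; group] at this

lemma wedge_delta_mul_le (ha : a ∈ S.P) (hb : b ∈ S.P) :
    S.le (S.wedge S.Δ (a * b)) (a * S.wedge S.Δ b) := by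
  -- `a⁻¹ (a ∨ (Δ ∧ a b))` lies below both `Δ` and `b`.
  set m := S.wedge S.Δ (a * b)
  have hab : S.le (S.vee a m) (a * b) :=
    S.vee_le _ _ _ (le_mul_of_mem hb a) (S.wedge_le_right _ _)
  have haΔ : S.le (S.vee a m) (a * S.Δ) :=
    S.vee_le _ _ _ (le_mul_of_mem S.delta_mem a)
      (le.trans (S.wedge_le_left _ _) (delta_le_mul_delta ha))
  have hwedge : S.le (a⁻¹ * S.vee a m) (S.wedge S.Δ b) := by
    refine S.le_wedge _ _ _ ((mul_le_mul_iff_left a).1 ?_) ((mul_le_mul_iff_left a).1 ?_)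
    · rwa [mul_inv_cancel_left]
    · rwa [mul_inv_cancel_left]
  refine le.trans (S.le_vee_right a m) ?_
  simpa using (mul_le_mul_iff_left a).2 hwedge

lemma wedge_delta_inv_mul_mem_closure {q : G} (hq : q ∈ Submonoid.closure S.simples) :
    (S.wedge S.Δ q)⁻¹ * q ∈ Submonoid.closure S.simples := by
  induction hq using Submonoid.closure_induction_left with
  | one => simp [wedge_eq_right (one_le_iff.2 S.delta_mem), one_mem]
  | mul_left s hs q hq ih =>
    have hqP : q ∈ S.P := closure_simples_le hq
    set h := S.wedge S.Δ q
    set m := S.wedge S.Δ (s * q)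
    have hsm : S.le s m := S.le_wedge _ _ _ hs.2 (le_mul_of_mem hqP s)
    have hhead : S.le m (s * h) := wedge_delta_mul_le hs.1 hqP
    have htail : S.le (s * h) (m * S.Δ) := by
      rw [← mul_le_mul_iff_left s⁻¹, inv_mul_cancel_left, ← mul_assoc]
      exact le.trans (S.wedge_le_left _ _) (delta_le_mul_delta hsm)
    have := mul_mem (Submonoid.subset_closure (inv_mul_mem_simples hhead htail)) ih
    rwa [show m⁻¹ * (s * h) * (h⁻¹ * q) = m⁻¹ * (s * q) by group] at this

lemma mem_closure_simples (ha : a ∈ S.P) : a ∈ Submonoid.closure S.simples := by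
  obtain ⟨n, hn⟩ := exists_delta_pow_mul_mem_closure (S := S) a
  induction n with
  | zero => simpa using hn
  | succ n ih =>
    refine ih ?_
    have hΔ : S.wedge S.Δ (S.Δ * (S.Δ ^ n * a)) = S.Δ :=
      wedge_eq_left (le_mul_of_mem (mul_mem (pow_mem S.delta_mem n) ha) _)
    have := wedge_delta_inv_mul_mem_closure (by rwa [pow_succ', mul_assoc] at hn)
    rwa [hΔ, inv_mul_cancel_left] at this

lemma closure_simples_eq : Submonoid.closure S.simples = S.P :=
  le_antisymm closure_simples_le fun _ => mem_closure_simples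

lemma delta_mem_normalizer : S.Δ ∈ Subgroup.normalizer (S.P : Set G) := by
  refine fun a => ⟨fun ha => ?_, fun ha => ?_⟩
  · exact closure_simples_eq (S := S) ▸ delta_conj_mem_closure (mem_closure_simples ha)
  · simpa [mul_assoc] using S.conj_pos _ ha

lemma delta_zpow_conj_mem_iff (n : ℤ) : S.Δ ^ n * a * (S.Δ ^ n)⁻¹ ∈ S.P ↔ a ∈ S.P :=
  (zpow_mem delta_mem_normalizer n a).symm

lemma mul_delta_zpow_le_mul_iff (n : ℤ) :
    S.le (a * S.Δ ^ n) (b * S.Δ ^ n) ↔ S.le a b := by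
  simpa [le, mul_assoc] using delta_zpow_conj_mem_iff (S := S) (a := a⁻¹ * b) (-n)

lemma mul_delta_zpow_le_iff (n : ℤ) : S.le (a * S.Δ ^ n) b ↔ S.le a (b * S.Δ ^ (-n)) := by
  rw [← mul_delta_zpow_le_mul_iff (-n)]
  simp

lemma delta_zpow_le_delta_zpow {m n : ℤ} (h : m ≤ n) : S.le (S.Δ ^ m) (S.Δ ^ n) := by
  have : S.Δ ^ (n - m) ∈ S.P := by
    lift n - m to ℕ using sub_nonneg.2 h with k
    simpa using pow_mem S.delta_mem k
  simpa [le, ← zpow_neg, ← zpow_add, neg_add_eq_sub] using this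

lemma neg_sup_le_inf_inv (y : G) : -S.sup y ≤ S.inf y⁻¹ := by
  refine S.inf_max _ _ ?_
  simpa [mul_assoc] using (delta_zpow_conj_mem_iff (S.sup y)).2 (S.le_sup y)

lemma one_le_mul_delta_neg_inf (y : G) : S.le 1 (y * S.Δ ^ (-S.inf y)) := by
  simpa using (mul_delta_zpow_le_iff (a := (1 : G)) (S.inf y)).1 (by simpa [le] using S.inf_le y)

lemma one_le_pp (y : G) : S.le 1 (S.pp y) :=
  S.le_wedge _ _ _ (S.le_wedge _ _ _ (one_le_mul_delta_neg_inf y) (one_le_iff.2 S.delta_mem))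
    (S.le_wedge _ _ _ (one_le_mul_delta_neg_inf y⁻¹) (one_le_iff.2 S.delta_mem))

lemma pp_le_mul_delta_neg_inf (y : G) : S.le (S.pp y) (y * S.Δ ^ (-S.inf y)) :=
  le.trans (S.wedge_le_left _ _) (S.wedge_le_left _ _)

lemma pp_le_inv_mul_delta_sup (y : G) : S.le (S.pp y) (y⁻¹ * S.Δ ^ S.sup y) :=
  le.trans (le.trans (S.wedge_le_right _ _) (S.wedge_le_left _ _))
    ((mul_le_mul_iff_left _).2
      (delta_zpow_le_delta_zpow (by linarith [neg_sup_le_inf_inv (S := S) y])))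

lemma delta_inf_le_sl (y : G) : S.le (S.Δ ^ S.inf y) (S.sl y) := by
  have hpp : S.le (S.pp y * S.Δ ^ S.inf y) y := by
    simpa using (mul_delta_zpow_le_iff (S.inf y)).2 (pp_le_mul_delta_neg_inf y)
  have : S.le (S.Δ ^ S.inf y) ((S.pp y)⁻¹ * y) := by
    rwa [← mul_le_mul_iff_left (S.pp y), mul_inv_cancel_left]
  exact le.trans this (le_mul_of_mem (one_le_iff.1 (one_le_pp y)) _)

lemma sl_le_delta_sup (y : G) : S.le (S.sl y) (S.Δ ^ S.sup y) := by
  have hypp : S.le (y * S.pp y) (S.Δ ^ S.sup y) := by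
    simpa using (mul_le_mul_iff_left y).2 (pp_le_inv_mul_delta_sup y)
  have hΔ : S.le (S.Δ ^ S.sup y) (S.pp y * S.Δ ^ S.sup y) := by
    simpa using (mul_delta_zpow_le_mul_iff (S.sup y)).2 (one_le_pp y)
  rw [sl, ← mul_le_mul_iff_left (S.pp y), mul_assoc, mul_inv_cancel_left]
  exact le.trans hypp hΔ

lemma inf_le_inf_sl_iterate (x : G) (k : ℕ) : S.inf x ≤ S.inf (S.sl^[k] x) := by
  induction k with
  | zero => rfl
  | succ k ih =>
    rw [Function.iterate_succ_apply']
    exact ih.trans (S.inf_max _ _ (delta_inf_le_sl _))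

lemma sup_sl_iterate_le_sup (x : G) (k : ℕ) : S.sup (S.sl^[k] x) ≤ S.sup x := by
  induction k with
  | zero => rfl
  | succ k ih =>
    rw [Function.iterate_succ_apply']
    exact (S.sup_min _ _ (sl_le_delta_sup _)).trans ih

lemma inv_wedge_delta_mul_le_delta_pow {y : G} {n : ℕ} (hy : S.le y (S.Δ ^ ((n : ℤ) + 1))) :
    S.le ((S.wedge S.Δ y)⁻¹ * y) (S.Δ ^ (n : ℤ)) := by
  have hyΔ : S.le (y * S.Δ ^ (-(n : ℤ))) S.Δ :=
    (mul_delta_zpow_le_iff _).2 (by rwa [neg_neg, ← zpow_one_add, add_comm])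
  have hyy : S.le (y * S.Δ ^ (-(n : ℤ))) y :=
    (mul_delta_zpow_le_iff _).2 (le_mul_of_mem (by simpa using pow_mem S.delta_mem n) y)
  have := (mul_delta_zpow_le_iff _).1 (S.le_wedge _ _ _ hyΔ hyy)
  rw [← mul_le_mul_iff_left (S.wedge S.Δ y), mul_inv_cancel_left]
  rwa [neg_neg] at this

def Icc (S : Garside G) (a b : G) : Set G := {y | S.le a y ∧ S.le y b}

lemma finite_Icc_one_delta_zpow (S : Garside G) (n : ℤ) : (S.Icc 1 (S.Δ ^ n)).Finite := by
  induction n using Int.induction_on with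
  | zero =>
    refine (Set.finite_singleton 1).subset fun y hy => ?_
    exact (le.antisymm hy.1 (by simpa using hy.2)).symm
  | succ n ih =>
    refine (S.simples_finite.image2 (· * ·) ih).subset fun y hy => ?_
    refine ⟨S.wedge S.Δ y, ⟨?_, S.wedge_le_left _ _⟩, (S.wedge S.Δ y)⁻¹ * y,
      ⟨one_le_iff.2 (S.wedge_le_right _ _), inv_wedge_delta_mul_le_delta_pow hy.2⟩,
      mul_inv_cancel_left _ _⟩
    exact one_le_iff.1 (S.le_wedge _ _ _ (one_le_iff.2 S.delta_mem) hy.1)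
  | pred n ih =>
    exact ih.subset fun y hy => ⟨hy.1, le.trans hy.2 (delta_zpow_le_delta_zpow (by omega))⟩

lemma finite_Icc_delta_zpow (S : Garside G) (p q : ℤ) : (S.Icc (S.Δ ^ p) (S.Δ ^ q)).Finite := by
  refine ((S.finite_Icc_one_delta_zpow (q - p)).image (S.Δ ^ p * ·)).subset fun y hy =>
    ⟨(S.Δ ^ p)⁻¹ * y, ⟨?_, ?_⟩, mul_inv_cancel_left _ _⟩
  · rw [← mul_le_mul_iff_left (S.Δ ^ p), mul_one, mul_inv_cancel_left]
    exact hy.1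
  · rw [← mul_le_mul_iff_left (S.Δ ^ p), mul_inv_cancel_left, ← zpow_add, add_sub_cancel]
    exact hy.2

end Garside

open Garside in
theorem statement1 {G : Type*} [Group G] (S : Garside G) (x : G) :
    ∃ (N M : ℕ), 0 < M ∧ (S.sl)^[M + N] x = (S.sl)^[N] x := by
  refine Function.exists_iterate_add_eq_of_finite (S.finite_Icc_delta_zpow (S.inf x) (S.sup x))
    fun k => ⟨?_, ?_⟩
  · exact le.trans (delta_zpow_le_delta_zpow (inf_le_inf_sl_iterate x k)) (S.inf_le _)
  · exact le.trans (S.le_sup _) (delta_zpow_le_delta_zpow (sup_sl_iterate_le_sup x k))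

end GarsidePaper
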